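/- Let V be a free abelian group with a fixed basis and a a basis element. Then Λ*V decomposes as a direct sum of abelian groups Λ*V ≅ Λ̄*V ⊕ (a ∧ Λ*V), where Λ̄*V is the subalgebra generated by the kernel of the augmentation V → ℤ. Consequently, Λ*V is isomorphic to two copies of Λ̄*V (with a degree shift). -/

import Mathlib

/-!
Contraction with the augmentation `d` is a twisted derivation of `Λ*M` that kills the
generators `ι v`, `v ∈ ker d`, hence kills all of `Λ̄*M`. For `a` with `d a = 1` it
satisfies `d⌋(a ∧ z) = z - a ∧ (d⌋z)`. So an element of `Λ̄*M ∩ (a ∧ Λ*M)` is `a ∧ z`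
with `z = a ∧ (d⌋z)`, hence zero since `a ∧ a = 0`; and `d⌋(a ∧ -)` is the identity on
`Λ̄*M`. Every generator `ι v = ι (v - d v • a) + d v • a` lies in `Λ̄*M + a ∧ Λ*M`, which
is closed under products because `a ∧ Λ*M` is a two-sided ideal.
-/

namespace CliffordAlgebra

variable {R M : Type*} [CommRing R] [AddCommGroup M] [Module R M] {Q : QuadraticForm R M}

theorem contractLeft_mul (d : Module.Dual R M) (x y : CliffordAlgebra Q) :
    contractLeft d (x * y) = contractLeft d x * y + involute x * contractLeft d y := by
  induction x using CliffordAlgebra.induction generalizing y with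
  | algebraMap r =>
    rw [contractLeft_algebraMap_mul, contractLeft_algebraMap, AlgHom.commutes, zero_mul,
      zero_add]
  | ι v =>
    rw [contractLeft_ι_mul, contractLeft_ι, involute_ι, Algebra.smul_def, neg_mul,
      sub_eq_add_neg]
  | mul x z hx hz =>
    rw [mul_assoc, hx, hz, hx z, map_mul]
    noncomm_ring
  | add x z hx hz =>
    rw [add_mul, map_add, hx, hz, map_add, map_add]
    noncomm_ring

end CliffordAlgebra

namespace ExteriorAlgebra

open CliffordAlgebra (contractLeft involute)

variable {R M : Type*} [CommRing R] [AddCommGroup M] [Module R M]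

theorem ι_mul_eq_involute_mul (v : M) (x : ExteriorAlgebra R M) :
    ι R v * x = involute x * ι R v := by
  induction x using ExteriorAlgebra.induction with
  | algebraMap r => rw [AlgHom.commutes, Algebra.commutes]
  | ι w => rw [CliffordAlgebra.involute_ι, neg_mul, eq_neg_iff_add_eq_zero, ι_add_mul_swap]
  | mul x z hx hz => rw [map_mul, ← mul_assoc, hx, mul_assoc, hz, mul_assoc]
  | add x z hx hz => rw [map_add, mul_add, add_mul, hx, hz]

theorem mul_ι_mul (v : M) (x y : ExteriorAlgebra R M) :
    x * (ι R v * y) = ι R v * (involute x * y) := by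
  rw [← mul_assoc, ← mul_assoc, ι_mul_eq_involute_mul, CliffordAlgebra.involute_involute]

/-- The paper's `Λ̄*M`, for the augmentation `d`. -/
def adjoinKer (d : M →ₗ[R] R) : Subalgebra R (ExteriorAlgebra R M) :=
  Algebra.adjoin R (ι R '' LinearMap.ker d)

theorem contractLeft_eq_zero_of_mem_adjoinKer (d : M →ₗ[R] R) {x : ExteriorAlgebra R M}
    (hx : x ∈ adjoinKer d) : contractLeft d x = 0 := by
  induction hx using Algebra.adjoin_induction with
  | mem x hx =>
    obtain ⟨w, hw, rfl⟩ := hx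
    rw [CliffordAlgebra.contractLeft_ι, LinearMap.mem_ker.mp hw, map_zero]
  | algebraMap r => exact CliffordAlgebra.contractLeft_algebraMap _ _ _
  | add x y _ _ hx hy => rw [map_add, hx, hy, add_zero]
  | mul x y _ _ hx hy =>
    rw [CliffordAlgebra.contractLeft_mul, hx, hy, zero_mul, mul_zero, add_zero]

variable (d : M →ₗ[R] R) {a : M} (ha : d a = 1)
include ha

theorem contractLeft_ι_mul_of_eq_one (z : ExteriorAlgebra R M) :
    contractLeft d (ι R a * z) = z - ι R a * contractLeft d z := by
  rw [CliffordAlgebra.contractLeft_ι_mul, ha, one_smul]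

theorem contractLeft_ι_mul_of_mem_adjoinKer {p : ExteriorAlgebra R M} (hp : p ∈ adjoinKer d) :
    contractLeft d (ι R a * p) = p := by
  rw [contractLeft_ι_mul_of_eq_one d ha, contractLeft_eq_zero_of_mem_adjoinKer d hp, mul_zero,
    sub_zero]

theorem disjoint_adjoinKer_range_mulLeft :
    Disjoint (Subalgebra.toSubmodule (adjoinKer d))
      (LinearMap.range (LinearMap.mulLeft R (ι R a))) := by
  rw [Submodule.disjoint_def]
  rintro _ hx ⟨z, rfl⟩
  have hz : z = ι R a * contractLeft d z := by
    rw [← sub_eq_zero, ← contractLeft_ι_mul_of_eq_one d ha]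
    exact contractLeft_eq_zero_of_mem_adjoinKer d hx
  rw [LinearMap.mulLeft_apply, hz, ← mul_assoc, ι_sq_zero, zero_mul]

theorem codisjoint_adjoinKer_range_mulLeft :
    Codisjoint (Subalgebra.toSubmodule (adjoinKer d))
      (LinearMap.range (LinearMap.mulLeft R (ι R a))) := by
  set I := LinearMap.range (LinearMap.mulLeft R (ι R a))
  have hI : ∀ z, ι R a * z ∈ I := fun z => ⟨z, rfl⟩
  rw [codisjoint_iff_le_sup]
  rintro x -
  induction x using ExteriorAlgebra.induction with
  | algebraMap r => exact Submodule.mem_sup_left (Subalgebra.algebraMap_mem _ r)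
  | ι v =>
    have hv : ι R v = ι R (v - d v • a) + d v • (ι R a * 1) := by
      rw [mul_one, map_sub, map_smul, sub_add_cancel]
    rw [hv]
    refine Submodule.add_mem _ (Submodule.mem_sup_left ?_)
      (Submodule.smul_mem _ _ (Submodule.mem_sup_right (hI 1)))
    exact Algebra.subset_adjoin ⟨_, by simp [ha], rfl⟩
  | mul x y hx hy =>
    obtain ⟨p, hp, _, ⟨q, rfl⟩, rfl⟩ := Submodule.mem_sup.mp hx
    obtain ⟨p', hp', _, ⟨q', rfl⟩, rfl⟩ := Submodule.mem_sup.mp hy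
    simp only [LinearMap.mulLeft_apply, mul_add, add_mul, mul_ι_mul, mul_assoc]
    exact Submodule.add_mem _
      (Submodule.add_mem _ (Submodule.mem_sup_left ((adjoinKer d).mul_mem hp hp'))
        (Submodule.mem_sup_right (hI _)))
      (Submodule.add_mem _ (Submodule.mem_sup_right (hI _)) (Submodule.mem_sup_right (hI _)))
  | add x y hx hy => exact Submodule.add_mem _ hx hy

theorem isCompl_adjoinKer_range_mulLeft :
    IsCompl (Subalgebra.toSubmodule (adjoinKer d))
      (LinearMap.range (LinearMap.mulLeft R (ι R a))) :=
  ⟨disjoint_adjoinKer_range_mulLeft d ha, codisjoint_adjoinKer_range_mulLeft d ha⟩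

theorem map_mulLeft_adjoinKer :
    (Subalgebra.toSubmodule (adjoinKer d)).map (LinearMap.mulLeft R (ι R a)) =
      LinearMap.range (LinearMap.mulLeft R (ι R a)) := by
  refine le_antisymm LinearMap.map_le_range ?_
  rintro _ ⟨z, rfl⟩
  have hz : z ∈ Subalgebra.toSubmodule (adjoinKer d) ⊔
      LinearMap.range (LinearMap.mulLeft R (ι R a)) :=
    (codisjoint_adjoinKer_range_mulLeft d ha).eq_top ▸ Submodule.mem_top
  obtain ⟨p, hp, _, ⟨q, rfl⟩, rfl⟩ := Submodule.mem_sup.mp hz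
  refine ⟨p, hp, ?_⟩
  simp only [LinearMap.mulLeft_apply, mul_add, ← mul_assoc, ι_sq_zero, zero_mul, add_zero]

noncomputable def adjoinKerEquivRangeMulLeft :
    Subalgebra.toSubmodule (adjoinKer d) ≃ₗ[R] LinearMap.range (LinearMap.mulLeft R (ι R a)) :=
  have hinj : Function.Injective
      ((LinearMap.mulLeft R (ι R a)).domRestrict (Subalgebra.toSubmodule (adjoinKer d))) :=
    fun p q hpq => Subtype.ext <| by
      rw [← contractLeft_ι_mul_of_mem_adjoinKer d ha p.2,
        ← contractLeft_ι_mul_of_mem_adjoinKer d ha q.2]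
      exact congrArg (contractLeft d) hpq
  (LinearEquiv.ofInjective _ hinj).trans <| LinearEquiv.ofEq _ _ <| by
    rw [LinearMap.range_domRestrict, map_mulLeft_adjoinKer d ha]

noncomputable def equivAdjoinKerProdAdjoinKer :
    ExteriorAlgebra R M ≃ₗ[R]
      Subalgebra.toSubmodule (adjoinKer d) × Subalgebra.toSubmodule (adjoinKer d) :=
  (Submodule.prodEquivOfIsCompl _ _ (isCompl_adjoinKer_range_mulLeft d ha)).symm.trans <|
    (LinearEquiv.refl R _).prodCongr (adjoinKerEquivRangeMulLeft d ha).symm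

end ExteriorAlgebra

/-- Let `V` be a free abelian group with basis `b` and `a = b i` a
basis element.  Then the exterior algebra `Λ*V` (over ℤ) decomposes as a direct sum
of abelian groups `Λ*V ≅ Λ̄*V ⊕ (a ∧ Λ*V)`, where `Λ̄*V` is the subalgebra generated
by the kernel of the augmentation `V → ℤ` (each basis element `↦ 1`): the submodules
`Λ̄*V` and `a ∧ Λ*V = range(x ↦ a ∧ x)` are complementary.  Consequently `Λ*V` is
isomorphic to two copies of `Λ̄*V`. -/
theorem stmt11 {ι V : Type*} [AddCommGroup V]
    (b : Module.Basis ι ℤ V) (i : ι)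
    (aug : V →ₗ[ℤ] ℤ) (haug : ∀ k, aug (b k) = 1) :
    IsCompl
        (Subalgebra.toSubmodule
          (Algebra.adjoin ℤ (⇑(ExteriorAlgebra.ι ℤ (M := V)) '' ↑(LinearMap.ker aug))))
        (LinearMap.range (LinearMap.mulLeft ℤ (ExteriorAlgebra.ι ℤ (b i)))) ∧
      Nonempty
        (ExteriorAlgebra ℤ V ≃ₗ[ℤ]
          (Subalgebra.toSubmodule
              (Algebra.adjoin ℤ
                (⇑(ExteriorAlgebra.ι ℤ (M := V)) '' ↑(LinearMap.ker aug))) ×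
            Subalgebra.toSubmodule
              (Algebra.adjoin ℤ
                (⇑(ExteriorAlgebra.ι ℤ (M := V)) '' ↑(LinearMap.ker aug))))) :=
  ⟨ExteriorAlgebra.isCompl_adjoinKer_range_mulLeft aug (haug i),
    ⟨ExteriorAlgebra.equivAdjoinKerProdAdjoinKer aug (haug i)⟩⟩
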